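/- arXiv:1202.6097 — 3 statements merged into one kernel-verified Lean document; each statement's English description precedes it below -/
import Mathlib

section
/- Let H be a subgroup of the symmetric group Perm(Fin 5) on 5 letters with |H| = 4 such that the natural action of H on Fin 5 = {0,1,2,3,4} has exactly 3 orbits. Then H is conjugate in Perm(Fin 5) to the subgroup generated by the two transpositions (0 1) and (2 3). -/
/-!
The orbit sizes of `H` divide `|H| = 4` and sum to `5` over three orbits, so they are `2, 2, 1`.
Hence `H` lies in the group of permutations preserving every orbit, which has order
`2! * 2! * 1! = 4`, so `H` is that group. A permutation carrying the blocks `{0, 1}, {2, 3}, {4}`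
onto the orbits conjugates it to the stabiliser of these blocks, which is generated by `(0 1)` and
`(2 3)` since it has order 4 and contains both.
-/

open Equiv MulAction
open scoped Nat

namespace Equiv.Perm

variable {α β : Type*}

def fiberStabilizer (f : α → β) : Subgroup (Perm α) where
  carrier := {σ | ∀ a, f (σ a) = f a}
  one_mem' _ := rfl
  mul_mem' hσ hτ a := (hσ _).trans (hτ a)
  inv_mem' {σ} hσ a := by simpa using (hσ (σ⁻¹ a)).symm

theorem mem_fiberStabilizer {f : α → β} {σ : Perm α} :
    σ ∈ fiberStabilizer f ↔ ∀ a, f (σ a) = f a :=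
  Iff.rfl

theorem card_fiberStabilizer [Fintype α] [DecidableEq α] [Fintype β] [DecidableEq β]
    (f : α → β) : Nat.card (fiberStabilizer f) = ∏ b, (Nat.card {a // f a = b})! := by
  rw [Nat.card_congr (subtypeEquivRight fun σ : Perm α =>
      mem_fiberStabilizer.trans (funext_iff (f := f ∘ σ)).symm),
    Nat.card_eq_fintype_card, DomMulAct.stabilizer_card]
  simp_rw [Nat.card_eq_fintype_card]

theorem fiberStabilizer_comp {γ : Type*} {e : β → γ} (he : Function.Injective e)
    (f : α → β) :
    fiberStabilizer (e ∘ f) = fiberStabilizer f := by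
  ext σ
  simp only [mem_fiberStabilizer, Function.comp_apply, he.eq_iff]

theorem map_conj_fiberStabilizer {f f' : α → β} (g : Perm α) (hg : ∀ a, f' (g a) = f a) :
    (fiberStabilizer f).map (MulAut.conj g).toMonoidHom = fiberStabilizer f' := by
  ext τ
  rw [Subgroup.mem_map_equiv, mem_fiberStabilizer, mem_fiberStabilizer]
  simp only [MulAut.conj_symm_apply, coe_mul, Function.comp_apply, ← hg, Perm.coe_inv,
    apply_symm_apply]
  exact g.forall_congr_right (q := fun b => f' (τ b) = f' b)

theorem exists_perm_comp_eq_of_card_fiber_eq [Finite α] {f f' : α → β}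
    (h : ∀ b, Nat.card {a // f a = b} = Nat.card {a // f' a = b}) :
    ∃ g : Perm α, ∀ a, f' (g a) = f a :=
  ⟨ofFiberEquiv fun b => (Finite.card_eq.mp (h b)).some, ofFiberEquiv_map _⟩

end Equiv.Perm

namespace MulAction

variable {G α : Type*} [Group G] [MulAction G α]

theorem card_fiber_orbitRel_dvd [Finite G] (q : orbitRel.Quotient G α) :
    Nat.card {a // (⟦a⟧ : orbitRel.Quotient G α) = q} ∣ Nat.card G := by
  obtain ⟨x, rfl⟩ := Quotient.exists_rep q
  rw [Nat.card_congr (subtypeEquivRight fun a => Quotient.eq.trans (orbitRel_apply ..)),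
    Nat.card_coe_set_eq, ← index_stabilizer]
  exact Subgroup.index_dvd_card _

theorem le_fiberStabilizer_orbitRel (H : Subgroup (Perm α)) :
    H ≤ Perm.fiberStabilizer (fun a => (⟦a⟧ : orbitRel.Quotient H α)) :=
  fun σ hσ _ => orbitRel.Quotient.quotient_smul_eq (g := (⟨σ, hσ⟩ : H))

end MulAction

theorem exists_equiv_fin_three_of_dvd_four_of_sum_eq_five {Q : Type*} [Fintype Q]
    (hQ : Fintype.card Q = 3) {s : Q → ℕ} (hdvd : ∀ q, s q ∣ 4) (hsum : ∑ q, s q = 5) :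
    ∃ β : Fin 3 ≃ Q, ∀ i, s (β i) = ![2, 2, 1] i := by
  obtain e := (Fintype.equivFinOfCardEq hQ).symm
  have hval : ∀ i, s (e i) = 1 ∨ s (e i) = 2 ∨ s (e i) = 4 := fun i => by
    have h4 : Nat.divisors 4 = {1, 2, 4} := by decide
    simpa [h4] using Nat.mem_divisors.mpr ⟨hdvd (e i), four_ne_zero⟩
  rw [← e.sum_comp, Fin.sum_univ_three] at hsum
  rcases hval 0 with h0 | h0 | h0 <;> rcases hval 1 with h1 | h1 | h1 <;>
    rcases hval 2 with h2 | h2 | h2 <;> try omega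
  · exact ⟨(swap 0 2).trans e, fun i => by
      fin_cases i <;> simp [h0, h1, h2, swap_apply_of_ne_of_ne]⟩
  · exact ⟨(swap 1 2).trans e, fun i => by
      fin_cases i <;> simp [h0, h1, h2, swap_apply_of_ne_of_ne]⟩
  · exact ⟨e, fun i => by fin_cases i <;> simp [h0, h1, h2]⟩

def blockOf : Fin 5 → Fin 3 := ![0, 0, 1, 1, 2]

theorem card_fiber_blockOf (i : Fin 3) : Nat.card {a // blockOf a = i} = ![2, 2, 1] i := by
  rw [Nat.card_eq_fintype_card]
  fin_cases i <;> rfl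

theorem card_fiberStabilizer_blockOf : Nat.card (Perm.fiberStabilizer blockOf) = 4 := by
  rw [Perm.card_fiberStabilizer, Fin.prod_univ_three]
  simp only [card_fiber_blockOf]
  rfl

theorem fiberStabilizer_blockOf :
    Perm.fiberStabilizer blockOf = Subgroup.closure {swap (0 : Fin 5) 1, swap (2 : Fin 5) 3} := by
  set K := Subgroup.closure {swap (0 : Fin 5) 1, swap (2 : Fin 5) 3}
  refine (Subgroup.eq_of_le_of_card_ge ?_ ?_).symm
  · rw [Subgroup.closure_le]
    rintro σ (rfl | rfl) <;> exact Perm.mem_fiberStabilizer.mpr (by decide)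
  · let S : Finset (Perm (Fin 5)) := {1, swap 0 1, swap 2 3, swap 0 1 * swap 2 3}
    have h01 : swap (0 : Fin 5) 1 ∈ K := Subgroup.subset_closure (by simp)
    have h23 : swap (2 : Fin 5) 3 ∈ K := Subgroup.subset_closure (by simp)
    have hSK : (S : Set (Perm (Fin 5))) ⊆ K := by
      simp only [S, Finset.coe_insert, Finset.coe_singleton, Set.insert_subset_iff,
        Set.singleton_subset_iff, SetLike.mem_coe]
      exact ⟨one_mem K, h01, h23, mul_mem h01 h23⟩
    calc Nat.card (Perm.fiberStabilizer blockOf) = S.card :=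
          card_fiberStabilizer_blockOf.trans (by decide)
      _ = (S : Set (Perm (Fin 5))).ncard := (Set.ncard_coe_finset S).symm
      _ ≤ Nat.card K := (Set.ncard_le_ncard hSK).trans (Nat.card_coe_set_eq _).ge

/-- A subgroup of `S₅` of order 4 whose natural action on the 5 points has exactly
3 orbits is conjugate to the subgroup generated by the transpositions `(0 1)` and `(2 3)`. -/
theorem stmt_8 (H : Subgroup (Equiv.Perm (Fin 5)))
    (hcard : Nat.card H = 4)
    (horb : Nat.card (MulAction.orbitRel.Quotient H (Fin 5)) = 3) :
    ∃ g : Equiv.Perm (Fin 5),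
      Subgroup.map (MulAut.conj g).toMonoidHom H =
        Subgroup.closure
          ({Equiv.swap (0 : Fin 5) 1, Equiv.swap (2 : Fin 5) 3} : Set (Equiv.Perm (Fin 5))) := by
  classical
  let π : Fin 5 → orbitRel.Quotient H (Fin 5) := fun a => ⟦a⟧
  have : Fintype (orbitRel.Quotient H (Fin 5)) := Fintype.ofFinite _
  have hsum : ∑ q, Nat.card {a // π a = q} = 5 :=
    Nat.card_sigma.symm.trans ((Nat.card_congr (sigmaFiberEquiv π)).trans (Nat.card_fin 5))
  obtain ⟨β, hβ⟩ := exists_equiv_fin_three_of_dvd_four_of_sum_eq_five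
    (Nat.card_eq_fintype_card.symm.trans horb) (fun q => hcard ▸ card_fiber_orbitRel_dvd q) hsum
  obtain ⟨g, hg⟩ := Perm.exists_perm_comp_eq_of_card_fiber_eq (f := β ∘ blockOf) (f' := π)
    fun q => by
      obtain ⟨i, rfl⟩ := β.surjective q
      simp only [Function.comp_apply, β.apply_eq_iff_eq, card_fiber_blockOf, hβ]
  have hg_inv : ∀ a, (β ∘ blockOf) (g⁻¹ a) = π a := fun a => by
    simpa using (hg (g⁻¹ a)).symm
  have hconj : (Perm.fiberStabilizer π).map (MulAut.conj g⁻¹).toMonoidHom =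
      Perm.fiberStabilizer blockOf := by
    rw [Perm.map_conj_fiberStabilizer g⁻¹ hg_inv, Perm.fiberStabilizer_comp β.injective]
  have hH : H = Perm.fiberStabilizer π := by
    refine Subgroup.eq_of_le_of_card_ge (le_fiberStabilizer_orbitRel H) ?_
    rw [hcard, ← card_fiberStabilizer_blockOf, ← hconj,
      Subgroup.card_map_of_injective (MulAut.conj g⁻¹).injective]
  exact ⟨g⁻¹, hH ▸ hconj.trans fiberStabilizer_blockOf⟩
end

section
/- Let g be a finite-dimensional Lie algebra over a field of characteristic 0 and let (e, h, f) be an sl₂-triple in g. Then g = [e, g] ⊕ z_g(f): the range of the adjoint operator ad(e) and the kernel of ad(f) are complementary linear subspaces of g. -/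
/-!
It suffices to treat any finite-dimensional module with endomorphisms `h, e, f` satisfying the
`sl₂` relations. By rank–nullity for `e` and `f`, `range e ⊕ ker f` is the whole space as soon as
both `range e ∩ ker f` and `range f ∩ ker e` vanish, and the first of these is the second one for
the opposite triple `(-h, f, e)`.

A relation `[a, b] = c • b` with `c ≠ 0` makes `b` nilpotent: on the eventual range of `b`, `b` is
invertible and conjugates `a` into `a + c`, so comparing traces kills that range. Hence `e` and `f`
are nilpotent, and the identity `eʲ fʲ w = j! (h - 0) ⋯ (h - (j - 1)) w` on `ker e` shows that `h`
acts on `ker e` with eigenvalues in `ℕ`.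

If `range f ∩ ker e ≠ 0`, it contains an `h`-eigenvector `x = f y` of weight `n ∈ ℕ`, and by
Fitting's decomposition `y` may be taken in the generalised eigenspace of `h` for `n + 2`. The
Casimir element `C` acts on `x` by `n² + 2n`, so `(C - n² - 2n) y` lies in `ker f`; being of
generalised weight `n + 2`, while `h` has only eigenvalues in `-ℕ` on `ker f`, it vanishes. Raising
`y` by `e` as far as possible gives a highest weight vector of weight `n + 2 + 2j`, on which `C`
acts by `(n + 2 + 2j)² + 2(n + 2 + 2j) ≠ n² + 2n`; hence `y = 0`.
-/

open Module LinearMap Polynomial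

namespace Module.End

section Algebra

variable {R A : Type*} [CommRing R] [Ring A] [Algebra R A]

theorem semiconjBy_sub_smul_of_lie_eq_smul {a b : A} {c : R} (hab : ⁅a, b⁆ = c • b) (μ : R) :
    SemiconjBy b (a - μ • 1) (a - (μ + c) • 1) := by
  rw [Ring.lie_def, sub_eq_iff_eq_add] at hab
  simp only [SemiconjBy, mul_sub, sub_mul, add_smul, add_mul, mul_smul_comm, smul_mul_assoc,
    mul_one, one_mul, hab]
  abel

theorem semiconjBy_pow_sub_smul_of_lie_eq_smul {a b : A} {c : R} (hab : ⁅a, b⁆ = c • b) (μ : R)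
    (m : ℕ) : SemiconjBy (b ^ m) (a - μ • 1) (a - (μ + m * c) • 1) := by
  induction m generalizing μ with
  | zero => simp
  | succ m ih =>
    have hμ : μ + c + m * c = μ + (m + 1 : ℕ) * c := by push_cast; ring
    rw [pow_succ, ← hμ]
    exact (ih (μ + c)).mul_left (semiconjBy_sub_smul_of_lie_eq_smul hab μ)

end Algebra

theorem exists_pow_apply_ne_zero_and_apply_eq_zero {R M : Type*} [Semiring R] [AddCommMonoid M]
    [Module R M] {a : End R M} {v : M} {r : ℕ} (hv : v ≠ 0) (hr : (a ^ r) v = 0) :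
    ∃ s, (a ^ s) v ≠ 0 ∧ a ((a ^ s) v) = 0 := by
  obtain ⟨s, hs, hs'⟩ := Nat.exists_not_and_succ_of_not_zero_of_exists
    (p := fun s ↦ (a ^ s) v = 0) (by simpa using hv) ⟨r, hr⟩
  exact ⟨s, hs, by rwa [pow_succ', mul_apply] at hs'⟩

theorem exists_pow_apply_eq_zero_and_apply_eq_of_semiconjBy {R M : Type*} [Ring R]
    [AddCommGroup M] [Module R M] [IsArtinian R M] [IsNoetherian R M] {g a b : End R M}
    (hg : SemiconjBy g a b) {x y : M} (hx : b x = 0) (hy : g y = x) :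
    ∃ r, ∃ y₁, (a ^ r) y₁ = 0 ∧ g y₁ = x := by
  obtain ⟨r, ⟨ha, hb⟩, hr⟩ := ((a.eventually_isCompl_ker_pow_range_pow.and
    b.eventually_isCompl_ker_pow_range_pow).and (Filter.eventually_ge_atTop 1)).exists
  obtain ⟨y₁, hy₁, _, ⟨z, rfl⟩, rfl⟩ :=
    Submodule.mem_sup.mp (ha.sup_eq_top ▸ Submodule.mem_top : y ∈ ker (a ^ r) ⊔ range (a ^ r))
  have hgr : g * a ^ r = b ^ r * g := (hg.pow_right r).eq
  have hbx : (b ^ r) x = 0 := by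
    obtain ⟨r', rfl⟩ : ∃ r', r = r' + 1 := ⟨r - 1, by omega⟩
    rw [pow_succ, mul_apply, hx, map_zero]
  have hgz : g ((a ^ r) z) = x - g y₁ := by rw [← hy, map_add, add_sub_cancel_left]
  have hz : g ((a ^ r) z) = 0 := by
    refine Submodule.disjoint_def.mp hb.disjoint _ ?_ ⟨g z, by rw [← mul_apply, ← hgr, mul_apply]⟩
    rw [mem_ker, hgz, map_sub, hbx, ← mul_apply (b ^ r) g, ← hgr, mul_apply, mem_ker.mp hy₁,
      map_zero, sub_zero]
  exact ⟨r, y₁, hy₁, (sub_eq_zero.mp (hgz.symm.trans hz)).symm⟩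

section CommRing

variable {R M : Type*} [CommRing R] [AddCommGroup M] [Module R M]

theorem pow_apply_sub_smul_of_lie_eq_smul {a b : End R M} {c : R} (hab : ⁅a, b⁆ = c • b) (μ : R)
    (m : ℕ) (v : M) :
    (b ^ m) (a v - μ • v) = a ((b ^ m) v) - (μ + m * c) • (b ^ m) v := by
  simpa using congr($((semiconjBy_pow_sub_smul_of_lie_eq_smul hab μ m).eq) v)

structure IsSl2Triple (h e f : End R M) : Prop where
  lie_e_f : ⁅e, f⁆ = h
  lie_h_e : ⁅h, e⁆ = (2 : R) • e
  lie_h_f : ⁅h, f⁆ = (-2 : R) • f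

/-- Twice the usual normalisation `ef + fe + h²/2` of the Casimir element of `sl₂`. -/
def sl2Casimir (h e f : End R M) : End R M :=
  4 • (f * e) + h * h + 2 • h

end CommRing

variable {K M : Type*} [Field K] [AddCommGroup M] [Module K M]

theorem exists_hasEigenvector_mem_of_aeval_prod_apply_eq_zero {ι : Type*} {T : End K M}
    {p : Submodule K M} (hp : ∀ v ∈ p, T v ∈ p) (c : ι → K) (s : Finset ι) {v : M} (hv : v ∈ p)
    (hv0 : v ≠ 0) (hs : aeval T (∏ i ∈ s, (X - C (c i))) v = 0) :
    ∃ μ, ∃ w ∈ p, T.HasEigenvector μ w := by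
  classical
  induction s using Finset.induction_on generalizing v with
  | empty => exact absurd (by simpa using hs) hv0
  | insert i s hi ih =>
    rw [Finset.prod_insert hi, mul_comm, map_mul, mul_apply] at hs
    by_cases hw : aeval T (X - C (c i)) v = 0
    · refine ⟨c i, v, hv, mem_eigenspace_iff.mpr ?_, hv0⟩
      simpa [sub_eq_zero] using hw
    · refine ih ?_ hw hs
      simpa using sub_mem (hp v hv) (p.smul_mem (c i) hv)

theorem isNilpotent_of_lie_eq_smul [CharZero K] [FiniteDimensional K M] {a b : End K M} {c : K}
    (hc : c ≠ 0) (hab : ⁅a, b⁆ = c • b) : IsNilpotent b := by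
  obtain ⟨n, hn⟩ := Filter.eventually_atTop.mp b.eventually_iInf_range_pow_eq
  set W := range (b ^ n)
  have hW : range (b ^ (n + 1)) = W := (hn (n + 1) n.le_succ).symm.trans (hn n le_rfl)
  have hbW : ∀ w ∈ W, b w ∈ W := by
    rintro _ ⟨v, rfl⟩
    exact ⟨b v, by rw [← mul_apply, ← pow_succ, pow_succ', mul_apply]⟩
  have haW : ∀ w ∈ W, a w ∈ W := by
    rintro _ ⟨v, rfl⟩
    have := pow_apply_sub_smul_of_lie_eq_smul hab 0 n v
    rw [zero_smul, sub_zero, zero_add, eq_sub_iff_add_eq] at this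
    rw [← this]
    exact add_mem (mem_range_self _ _) (W.smul_mem _ (mem_range_self _ _))
  set B := b.restrict hbW
  set A := a.restrict haW
  have hsurj : Function.Surjective B := by
    rintro ⟨w, hw⟩
    rw [← hW] at hw
    obtain ⟨v, rfl⟩ := hw
    exact ⟨⟨(b ^ n) v, mem_range_self _ _⟩, Subtype.ext (by simp [B, pow_succ'])⟩
  have hB : IsUnit B := (isUnit_iff B).mpr ⟨injective_iff_surjective.mpr hsurj, hsurj⟩
  have hAB : A * B = B * (A + c • 1) := by
    ext ⟨w, hw⟩
    have := pow_apply_sub_smul_of_lie_eq_smul hab (-c) 1 w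
    simp only [pow_one, Nat.cast_one, one_mul, neg_add_cancel, zero_smul, sub_zero] at this
    simpa [A, B] using this.symm
  have htr : trace K W (A + c • 1) = trace K W A := by
    conv_rhs => rw [← trace_conj K A hB.unit⁻¹]
    rw [inv_inv, IsUnit.unit_spec, mul_assoc, hAB, ← mul_assoc, hB.val_inv_mul, one_mul]
  rw [map_add, map_smul, trace_one, add_eq_left, smul_eq_zero, Nat.cast_eq_zero,
    Submodule.finrank_eq_zero] at htr
  exact ⟨n, range_eq_bot.mp (htr.resolve_left hc)⟩

theorem isCompl_range_ker_of_disjoint [FiniteDimensional K M] {a b : End K M}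
    (hab : Disjoint (range a) (ker b)) (hba : Disjoint (range b) (ker a)) :
    IsCompl (range a) (ker b) := by
  refine (Submodule.isCompl_iff_disjoint _ _ ?_).mpr hab
  have := Submodule.finrank_add_finrank_le_of_disjoint hba
  have := finrank_range_add_finrank_ker a
  have := finrank_range_add_finrank_ker b
  omega

theorem sl2Casimir_apply_of_apply_e_eq_zero {h e f : End K M} {w : M} {μ : K} (hw : e w = 0)
    (hμ : h w = μ • w) : sl2Casimir h e f w = (μ ^ 2 + 2 * μ) • w := by
  simp [sl2Casimir, hw, hμ, smul_smul]
  module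

namespace IsSl2Triple

variable {h e f : End K M}

theorem symm (t : IsSl2Triple h e f) : IsSl2Triple (-h) f e where
  lie_e_f := by rw [Ring.lie_def, ← neg_sub, ← Ring.lie_def, t.lie_e_f]
  lie_h_e := by
    rw [Ring.lie_def, neg_mul, mul_neg, neg_sub_neg, ← neg_sub, ← Ring.lie_def, t.lie_h_f,
      ← neg_smul, neg_neg]
  lie_h_f := by
    rw [Ring.lie_def, neg_mul, mul_neg, neg_sub_neg, ← neg_sub, ← Ring.lie_def, t.lie_h_e,
      ← neg_smul]

theorem commute_sl2Casimir_h (t : IsSl2Triple h e f) : Commute (sl2Casimir h e f) h := by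
  have he : h * e - e * h - 2 • e = 0 := by
    rw [← Ring.lie_def, t.lie_h_e, two_smul, two_smul]; abel
  have hf : h * f - f * h + 2 • f = 0 := by
    rw [← Ring.lie_def, t.lie_h_f, neg_smul, two_smul, two_smul]; abel
  rw [commute_iff_eq, ← sub_eq_zero]
  calc sl2Casimir h e f * h - h * sl2Casimir h e f
      = -(4 • (f * (h * e - e * h - 2 • e))) - 4 • ((h * f - f * h + 2 • f) * e) := by
        unfold sl2Casimir; noncomm_ring
    _ = 0 := by rw [he, hf]; simp

theorem commute_sl2Casimir_e (t : IsSl2Triple h e f) : Commute (sl2Casimir h e f) e := by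
  have hef : e * f - f * e - h = 0 := by rw [← Ring.lie_def, t.lie_e_f, sub_self]
  have he : h * e - e * h - 2 • e = 0 := by
    rw [← Ring.lie_def, t.lie_h_e, two_smul, two_smul]; abel
  rw [commute_iff_eq, ← sub_eq_zero]
  calc sl2Casimir h e f * e - e * sl2Casimir h e f
      = -(4 • ((e * f - f * e - h) * e)) + h * (h * e - e * h - 2 • e)
          + (h * e - e * h - 2 • e) * h := by
        unfold sl2Casimir; noncomm_ring
    _ = 0 := by rw [hef, he]; simp

theorem commute_sl2Casimir_f (t : IsSl2Triple h e f) : Commute (sl2Casimir h e f) f := by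
  have hef : e * f - f * e - h = 0 := by rw [← Ring.lie_def, t.lie_e_f, sub_self]
  have hf : h * f - f * h + 2 • f = 0 := by
    rw [← Ring.lie_def, t.lie_h_f, neg_smul, two_smul, two_smul]; abel
  rw [commute_iff_eq, ← sub_eq_zero]
  calc sl2Casimir h e f * f - f * sl2Casimir h e f
      = 4 • (f * (e * f - f * e - h)) + h * (h * f - f * h + 2 • f)
          + (h * f - f * h + 2 • f) * h := by
        unfold sl2Casimir; noncomm_ring
    _ = 0 := by rw [hef, hf]; simp

theorem commute_sl2Casimir_sub_smul (t : IsSl2Triple h e f) (γ μ : K) :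
    Commute (sl2Casimir h e f - γ • 1) (h - μ • 1) :=
  (t.commute_sl2Casimir_h.sub_right ((Commute.one_right _).smul_right μ)).sub_left
    ((Commute.one_left _).smul_left γ)

theorem apply_e_apply_h_eq_zero (t : IsSl2Triple h e f) {w : M} (hw : e w = 0) : e (h w) = 0 := by
  simpa [hw] using pow_apply_sub_smul_of_lie_eq_smul t.lie_h_e 0 1 w

theorem apply_e_apply_f_pow_succ (t : IsSl2Triple h e f) {w : M} (hw : e w = 0) (j : ℕ) :
    e ((f ^ (j + 1)) w) = ((j : K) + 1) • (f ^ j) (h w - (j : K) • w) := by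
  have hef : ∀ v, e (f v) = f (e v) + h v := fun v ↦ by
    simpa [Ring.lie_def, sub_eq_iff_eq_add'] using congr($(t.lie_e_f) v)
  induction j with
  | zero => simp [hef, hw]
  | succ j ih =>
    have hh := pow_apply_sub_smul_of_lie_eq_smul t.lie_h_f 0 (j + 1) w
    rw [pow_succ', mul_apply, hef, ih, map_smul, ← mul_apply f, ← pow_succ',
      sub_eq_iff_eq_add.mp hh.symm]
    simp only [map_sub, map_smul]
    push_cast
    module

theorem e_pow_apply_f_pow_apply (t : IsSl2Triple h e f) {w : M} (hw : e w = 0) (j : ℕ) :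
    (e ^ j) ((f ^ j) w) =
      (j.factorial : K) • aeval h (∏ i ∈ Finset.range j, (X - C (i : K))) w := by
  induction j generalizing w with
  | zero => simp
  | succ j ih =>
    have hw' : e (h w - (j : K) • w) = 0 := by simp [t.apply_e_apply_h_eq_zero hw, hw]
    rw [pow_succ, mul_apply, t.apply_e_apply_f_pow_succ hw, map_smul, ih hw',
      Finset.prod_range_succ, map_mul, mul_apply, smul_smul, Nat.factorial_succ]
    simp [mul_comm, Nat.cast_smul_eq_nsmul]

theorem exists_aeval_prod_apply_eq_zero [CharZero K] [FiniteDimensional K M]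
    (t : IsSl2Triple h e f) :
    ∃ N, ∀ w, e w = 0 → aeval h (∏ i ∈ Finset.range N, (X - C (i : K))) w = 0 := by
  obtain ⟨N, hN⟩ := isNilpotent_of_lie_eq_smul (by norm_num) t.lie_h_f
  refine ⟨N, fun w hw ↦ ?_⟩
  have := t.e_pow_apply_f_pow_apply hw N
  rw [hN, LinearMap.zero_apply, map_zero, eq_comm, smul_eq_zero] at this
  exact this.resolve_left (Nat.cast_ne_zero.mpr N.factorial_ne_zero)

theorem exists_nat_of_hasEigenvector [CharZero K] [FiniteDimensional K M]
    (t : IsSl2Triple h e f) {w : M} {μ : K} (hw : e w = 0) (hμ : h.HasEigenvector μ w) :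
    ∃ n : ℕ, μ = n := by
  obtain ⟨N, hN⟩ := t.exists_aeval_prod_apply_eq_zero
  have := hN w hw
  rw [aeval_apply_of_hasEigenvector hμ, smul_eq_zero, eval_prod] at this
  obtain ⟨i, -, hi⟩ := Finset.prod_eq_zero_iff.mp (this.resolve_right hμ.2)
  exact ⟨i, by simpa [sub_eq_zero] using hi⟩

theorem sl2Casimir_apply_eq_of_primitive_f_apply [CharZero K] [FiniteDimensional K M]
    (t : IsSl2Triple h e f) {n r : ℕ} {y : M} (hy : ((h - ((n : K) + 2) • 1) ^ r) y = 0)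
    (he : e (f y) = 0) (hn : h (f y) = (n : K) • f y) :
    sl2Casimir h e f y = ((n : K) ^ 2 + 2 * n) • y := by
  set a := h - ((n : K) + 2) • 1
  set z := (sl2Casimir h e f - ((n : K) ^ 2 + 2 * n) • 1 : End K M) y
  by_contra hne
  have hz0 : z ≠ 0 := by simpa [z, sub_eq_zero] using hne
  have hz : (a ^ r) z = 0 := by
    rw [← mul_apply, ((t.commute_sl2Casimir_sub_smul _ _).pow_right r).eq.symm, mul_apply, hy,
      map_zero]
  have hfz : f z = 0 := by
    rw [← mul_apply, ← (t.commute_sl2Casimir_f.sub_left ((Commute.one_left f).smul_left _)).eq]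
    simp [sl2Casimir_apply_of_apply_e_eq_zero he hn]
  obtain ⟨s, hs0, hs⟩ := exists_pow_apply_ne_zero_and_apply_eq_zero hz0 hz
  have hfs : f ((a ^ s) z) = 0 := by
    rw [← mul_apply, ((semiconjBy_sub_smul_of_lie_eq_smul t.lie_h_f _).pow_right s).eq,
      mul_apply, hfz, map_zero]
  have hh : h ((a ^ s) z) = ((n : K) + 2) • (a ^ s) z := by simpa [a, sub_eq_zero] using hs
  have hneg : (-h) ((a ^ s) z) = (-((n : K) + 2)) • (a ^ s) z := by
    rw [LinearMap.neg_apply, hh, neg_smul]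
  obtain ⟨m, hm⟩ := t.symm.exists_nat_of_hasEigenvector hfs ⟨mem_eigenspace_iff.mpr hneg, hs0⟩
  have : ((m + n + 2 : ℕ) : K) = 0 := by push_cast; linear_combination -hm
  exact absurd (Nat.cast_eq_zero.mp this) (by omega)

theorem eq_zero_of_sl2Casimir_apply_eq [CharZero K] [FiniteDimensional K M]
    (t : IsSl2Triple h e f) {μ γ : K} {r : ℕ} {y : M} (hy : ((h - μ • 1) ^ r) y = 0)
    (hC : sl2Casimir h e f y = γ • y) (hγ : ∀ j : ℕ, (μ + j * 2) ^ 2 + 2 * (μ + j * 2) ≠ γ) :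
    y = 0 := by
  by_contra hy0
  obtain ⟨N, hN⟩ := isNilpotent_of_lie_eq_smul two_ne_zero t.lie_h_e
  obtain ⟨j, hj0, hj⟩ :=
    exists_pow_apply_ne_zero_and_apply_eq_zero (r := N) hy0 (by rw [hN, LinearMap.zero_apply])
  set ν := μ + j * 2
  have hu : ((h - ν • 1) ^ r) ((e ^ j) y) = 0 := by
    rw [← mul_apply, ← ((semiconjBy_pow_sub_smul_of_lie_eq_smul t.lie_h_e μ j).pow_right r).eq,
      mul_apply, hy, map_zero]
  obtain ⟨s, hs0, hs⟩ := exists_pow_apply_ne_zero_and_apply_eq_zero hj0 hu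
  set u := ((h - ν • 1) ^ s) ((e ^ j) y)
  have heu : e u = 0 := by
    rw [← mul_apply, ((semiconjBy_sub_smul_of_lie_eq_smul t.lie_h_e ν).pow_right s).eq,
      mul_apply, hj, map_zero]
  have hhu : h u = ν • u := by simpa [sub_eq_zero] using hs
  have hCu : sl2Casimir h e f u = γ • u := by
    have hCe := (t.commute_sl2Casimir_e.pow_right j).eq
    have hCh := ((t.commute_sl2Casimir_sub_smul 0 ν).pow_right s).eq
    simp only [zero_smul, sub_zero] at hCh
    rw [← mul_apply, hCh, mul_apply, ← mul_apply _ (e ^ j), hCe, mul_apply, hC, map_smul,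
      map_smul]
  exact hγ j (smul_left_injective K hs0
    ((sl2Casimir_apply_of_apply_e_eq_zero heu hhu).symm.trans hCu))

theorem disjoint_range_f_ker_e [CharZero K] [FiniteDimensional K M] (t : IsSl2Triple h e f) :
    Disjoint (range f) (ker e) := by
  rw [disjoint_iff]
  by_contra hS
  obtain ⟨v, hv, hv0⟩ := Submodule.exists_mem_ne_zero_of_ne_bot hS
  have hinv : ∀ w ∈ range f ⊓ ker e, h w ∈ range f ⊓ ker e := by
    rintro _ ⟨⟨y, rfl⟩, hy⟩
    refine ⟨⟨h y - (2 : K) • y, ?_⟩, t.apply_e_apply_h_eq_zero hy⟩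
    simpa using pow_apply_sub_smul_of_lie_eq_smul t.lie_h_f 2 1 y
  obtain ⟨N, hN⟩ := t.exists_aeval_prod_apply_eq_zero
  obtain ⟨μ, _, ⟨⟨y, rfl⟩, hxe⟩, hx⟩ := exists_hasEigenvector_mem_of_aeval_prod_apply_eq_zero
    hinv (fun i : ℕ ↦ (i : K)) (Finset.range N) hv hv0 (hN v hv.2)
  obtain ⟨n, rfl⟩ := t.exists_nat_of_hasEigenvector hxe hx
  obtain ⟨r, y₁, hy₁, hfy₁⟩ := exists_pow_apply_eq_zero_and_apply_eq_of_semiconjBy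
    (semiconjBy_sub_smul_of_lie_eq_smul t.lie_h_f ((n : K) + 2)) (x := f y)
    (by simp [hx.apply_eq_smul]) rfl
  have hC := t.sl2Casimir_apply_eq_of_primitive_f_apply hy₁ (hfy₁ ▸ hxe) (hfy₁ ▸ hx.apply_eq_smul)
  refine hx.2 (hfy₁ ▸ ?_)
  rw [t.eq_zero_of_sl2Casimir_apply_eq hy₁ hC fun j hj ↦ ?_, map_zero]
  have : (((n + 2 + j * 2) ^ 2 + 2 * (n + 2 + j * 2) : ℕ) : K) = ((n ^ 2 + 2 * n : ℕ) : K) := by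
    push_cast
    linear_combination hj
  have := Nat.cast_injective this
  nlinarith

theorem isCompl_range_e_ker_f [CharZero K] [FiniteDimensional K M] (t : IsSl2Triple h e f) :
    IsCompl (range e) (ker f) :=
  isCompl_range_ker_of_disjoint t.symm.disjoint_range_f_ker_e t.disjoint_range_f_ker_e

end IsSl2Triple

end Module.End

theorem stmt_13_general (k : Type*) (g : Type*) [Field k] [CharZero k]
    [LieRing g] [LieAlgebra k g] [FiniteDimensional k g]
    (e h f : g)
    (hhe : ⁅h, e⁆ = (2 : k) • e) (hhf : ⁅h, f⁆ = -((2 : k) • f)) (hef : ⁅e, f⁆ = h) :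
    IsCompl (LinearMap.range (LieAlgebra.ad k g e)) (LinearMap.ker (LieAlgebra.ad k g f)) := by
  have ad_lie (x y : g) :
      LieAlgebra.ad k g ⁅x, y⁆ = ⁅LieAlgebra.ad k g x, LieAlgebra.ad k g y⁆ := by
    ext z
    simp [Ring.lie_def]
  have t : Module.End.IsSl2Triple (LieAlgebra.ad k g h) (LieAlgebra.ad k g e)
      (LieAlgebra.ad k g f) :=
    { lie_e_f := by rw [← ad_lie, hef]
      lie_h_e := by rw [← ad_lie, hhe, map_smul]
      lie_h_f := by rw [← ad_lie, hhf, map_neg, map_smul, neg_smul] }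
  exact t.isCompl_range_e_ker_f

/-- For an `sl₂`-triple `(e, h, f)` in a finite-dimensional Lie algebra `g` over a field
of characteristic 0, the range of `ad e` and the kernel of `ad f` (the centralizer of `f`)
are complementary linear subspaces: `g = [e, g] ⊕ z_g(f)`. -/
theorem stmt_13 (k : Type*) (g : Type*) [Field k] [CharZero k]
    [LieRing g] [LieAlgebra k g] [FiniteDimensional k g]
    (e h f : g) (hne : e ≠ 0)
    (hhe : ⁅h, e⁆ = (2 : k) • e) (hhf : ⁅h, f⁆ = -((2 : k) • f)) (hef : ⁅e, f⁆ = h) :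
    IsCompl (LinearMap.range (LieAlgebra.ad k g e)) (LinearMap.ker (LieAlgebra.ad k g f)) :=
  stmt_13_general k g e h f hhe hhf hef
end

section
/- Let g be a finite-dimensional Lie algebra over a field of characteristic 0 whose Killing form κ is nondegenerate, and let (e, h, f) be an sl₂-triple in g. Let g(−1) := {x ∈ g : [h, x] = −x} be the (−1)-eigenspace of ad(h). Then the alternating bilinear form ω_χ on g(−1) defined by ω_χ(ξ, η) := κ(e, [ξ, η]) is nondegenerate; that is, (g(−1), ω_χ) is a symplectic vector space. -/
/-!
By invariance of `κ`, `ω_χ(ξ, η) = κ(⁅e, ξ⁆, η)`. So if `ξ ∈ g(-1)` lies in the radical of `ω_χ`,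
then `u = ⁅e, ξ⁆`, a vector of `ad h`-weight `1`, is `κ`-orthogonal to `g(-1) = ker (ad h + 1)`;
invariance also makes it orthogonal to `range (ad h + 1)`. In a finite-dimensional
`sl₂`-representation `h` has no nontrivial Jordan blocks, so these two subspaces span `g` and
`u = 0` by nondegeneracy. Then `ξ`, if nonzero, would be a primitive vector of weight `-1`, whereas
weights of primitive vectors are natural numbers.
-/

open LieAlgebra LieModule

lemma Module.End.exists_eq_zero_of_apply_eq_smul {K V : Type*} [Field K] [AddCommGroup V]
    [Module K V] [FiniteDimensional K V] (T : Module.End K V) {v : ℕ → V} {μ : ℕ → K}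
    (hμ : Function.Injective μ) (hv : ∀ j, T (v j) = μ j • v j) : ∃ j, v j = 0 := by
  by_contra! hne
  exact Module.Finite.not_linearIndependent_of_infinite v <|
    T.eigenvectors_linearIndependent' μ hμ v fun j ↦
      Module.End.hasEigenvector_iff.mpr ⟨Module.End.mem_eigenspace_iff.mpr (hv j), hne j⟩

namespace IsSl2Triple

section CommRing

variable {R L M : Type*} [CommRing R] [LieRing L] [LieAlgebra R L] [AddCommGroup M] [Module R M]
  [LieRingModule L M] [LieModule R L M] {h e f : L} {μ : R} {z w : M}

local notation "ψ " n => ((toEnd R L M f) ^ n)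

lemma lie_h_lie_e_of_lie_h_eq (t : IsSl2Triple h e f) (hz : ⁅h, z⁆ = μ • z + w) :
    ⁅h, ⁅e, z⁆⁆ = (μ + 2) • ⁅e, z⁆ + ⁅e, w⁆ := by
  rw [leibniz_lie, t.lie_h_e_smul R, hz, smul_lie, lie_add, lie_smul]
  module

lemma lie_h_pow_toEnd_f_of_lie_h_eq (t : IsSl2Triple h e f) (hz : ⁅h, z⁆ = μ • z + w) (s : ℕ) :
    ⁅h, (ψ s) z⁆ = (μ - 2 * s) • (ψ s) z + (ψ s) w := by
  induction s with
  | zero => simpa using hz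
  | succ s ih =>
    rw [pow_succ', Module.End.mul_apply, Module.End.mul_apply, toEnd_apply_apply,
      toEnd_apply_apply, leibniz_lie, t.lie_lie_smul_f R, ih, neg_lie, smul_lie, lie_add, lie_smul]
    push_cast
    module

lemma lie_e_pow_succ_toEnd_f_of_lie_h_eq (t : IsSl2Triple h e f) (hz : ⁅h, z⁆ = μ • z + w)
    (s : ℕ) :
    ⁅e, (ψ (s + 1)) z⁆ =
      (ψ (s + 1)) ⁅e, z⁆ + ((s + 1) * (μ - s)) • (ψ s) z + ((s : R) + 1) • (ψ s) w := by
  induction s with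
  | zero =>
    simp only [zero_add, pow_one, pow_zero, Module.End.one_apply, toEnd_apply_apply,
      leibniz_lie e f, t.lie_e_f, hz, Nat.cast_zero]
    module
  | succ s ih =>
    rw [pow_succ' _ (s + 1), Module.End.mul_apply, toEnd_apply_apply, leibniz_lie e f, t.lie_e_f,
      t.lie_h_pow_toEnd_f_of_lie_h_eq hz, ih, Module.End.mul_apply, toEnd_apply_apply,
      pow_succ' _ s, Module.End.mul_apply, Module.End.mul_apply, toEnd_apply_apply,
      toEnd_apply_apply]
    simp only [lie_add, lie_smul]
    push_cast
    module

end CommRing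

section Field

variable {K L M : Type*} [Field K] [CharZero K] [LieRing L] [LieAlgebra K L] [AddCommGroup M]
  [Module K M] [LieRingModule L M] [LieModule K L M] [FiniteDimensional K M] {h e f : L}

lemma exists_pow_toEnd_e_eq_zero (t : IsSl2Triple h e f) {μ : K} {m : M} (hm : ⁅h, m⁆ = μ • m) :
    ∃ r, ((toEnd K L M e) ^ r) m = 0 :=
  (toEnd K L M h).exists_eq_zero_of_apply_eq_smul (μ := fun j : ℕ ↦ μ + 2 * j)
    (fun a b hab ↦ by simpa using hab) (t.lie_h_pow_toEnd_e hm)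

lemma exists_pow_toEnd_f_eq_zero (t : IsSl2Triple h e f) {μ : K} {m : M} (hm : ⁅h, m⁆ = μ • m) :
    ∃ r, ((toEnd K L M f) ^ r) m = 0 :=
  (toEnd K L M h).exists_eq_zero_of_apply_eq_smul (μ := fun j : ℕ ↦ μ - 2 * j)
    (fun a b hab ↦ by simpa using hab)
    (fun j ↦ by simpa using t.lie_h_pow_toEnd_f_of_lie_h_eq (w := (0 : M)) (by simpa using hm) j)

lemma exists_lie_e_eq_of_lie_h_eq (t : IsSl2Triple h e f) {ν : K} (hν : ∀ j : ℕ, ν + j ≠ 0)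
    {p : M} (hp : ⁅h, p⁆ = ν • p) : ∃ q, ⁅h, q⁆ = (ν - 2) • q ∧ ⁅e, q⁆ = p := by
  set S := (Module.End.eigenspace (toEnd K L M h) (ν - 2)).map (toEnd K L M e)
  set a : ℕ → M := fun j ↦ ((toEnd K L M f) ^ j) (((toEnd K L M e) ^ j) p)
  have hweight (j : ℕ) : ⁅h, ((toEnd K L M e) ^ j) p⁆ = (ν + 2 * j) • ((toEnd K L M e) ^ j) p :=
    t.lie_h_pow_toEnd_e hp j
  have hfa (j : ℕ) : ⁅f, a j⁆ = ((toEnd K L M f) ^ (j + 1)) (((toEnd K L M e) ^ j) p) := by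
    rw [pow_succ', Module.End.mul_apply, toEnd_apply_apply]
  have hfa_weight (j : ℕ) : ⁅h, ⁅f, a j⁆⁆ = (ν - 2) • ⁅f, a j⁆ := by
    have := t.lie_h_pow_toEnd_f_of_lie_h_eq (w := (0 : M)) (by simpa using hweight j) (j + 1)
    rw [hfa, this, map_zero, add_zero]
    push_cast
    ring_nf
  have hrec (j : ℕ) : ⁅e, ⁅f, a j⁆⁆ = a (j + 1) + ((j + 1) * (ν + j)) • a j := by
    have := t.lie_e_pow_succ_toEnd_f_of_lie_h_eq (w := (0 : M)) (by simpa using hweight j) j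
    rw [hfa, this, map_zero, smul_zero, add_zero, lie_e_pow_toEnd_e]
    congr 2
    ring
  -- `a j` vanishes for large `j`, and `hrec` gives `a j` from `a (j + 1)` modulo `S`.
  have hmem : ∀ d j, ((toEnd K L M e) ^ (j + d)) p = 0 → a j ∈ S := by
    intro d
    induction d with
    | zero => intro j hj; simp [a, show ((toEnd K L M e) ^ j) p = 0 from hj]
    | succ d ih =>
      intro j hj
      have hc : ((j + 1) * (ν + j) : K) ≠ 0 := mul_ne_zero (Nat.cast_add_one_ne_zero j) (hν j)
      have : a j = ((j + 1) * (ν + j) : K)⁻¹ • (⁅e, ⁅f, a j⁆⁆ - a (j + 1)) := by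
        rw [hrec, add_sub_cancel_left, smul_smul, inv_mul_cancel₀ hc, one_smul]
      rw [this]
      refine S.smul_mem _ (S.sub_mem ?_ (ih (j + 1) (by rwa [add_right_comm])))
      exact Submodule.mem_map_of_mem (Module.End.mem_eigenspace_iff.mpr (hfa_weight j))
  obtain ⟨r, hr⟩ := t.exists_pow_toEnd_e_eq_zero hp
  obtain ⟨q, hq, rfl⟩ := hmem r 0 (by rwa [zero_add])
  exact ⟨q, Module.End.mem_eigenspace_iff.mp hq, rfl⟩

lemma exists_nat_of_lie_f_lie_e_eq_zero (t : IsSl2Triple h e f) {μ : K} {v : M} (hv : v ≠ 0)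
    (hμ : ⁅h, v⁆ = μ • v) (hfe : ⁅f, ⁅e, v⁆⁆ = 0) : ∃ n : ℕ, μ = n := by
  obtain ⟨n, hn, hn'⟩ := Nat.exists_not_and_succ_of_not_zero_of_exists (by simpa using hv)
    (t.exists_pow_toEnd_f_eq_zero hμ)
  refine ⟨n, ?_⟩
  have hfe' : ((toEnd K L M f) ^ (n + 1)) ⁅e, v⁆ = 0 := by
    rw [pow_succ, Module.End.mul_apply, toEnd_apply_apply, hfe, map_zero]
  have := t.lie_e_pow_succ_toEnd_f_of_lie_h_eq (w := (0 : M)) (by simpa using hμ) n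
  rw [hn', lie_zero, hfe', map_zero, smul_zero, add_zero, zero_add, eq_comm,
    smul_eq_zero_iff_left hn, mul_eq_zero, sub_eq_zero] at this
  exact this.resolve_left (Nat.cast_add_one_ne_zero n)

lemma eq_zero_of_lie_e_eq_zero_of_lie_h_eq (t : IsSl2Triple h e f) {μ : K} {z w : M}
    (hz : ⁅h, z⁆ = μ • z + w) (hw : ⁅h, w⁆ = μ • w) (hew : ⁅e, w⁆ = 0) : w = 0 := by
  by_contra hw0
  have P : t.HasPrimitiveVectorWith w μ := ⟨hw0, hw, hew⟩
  obtain ⟨n, rfl⟩ := P.exists_nat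
  have hez : ⁅h, ⁅e, z⁆⁆ = ((n + 2 : ℕ) : K) • ⁅e, z⁆ := by
    simpa [hew] using t.lie_h_lie_e_of_lie_h_eq hz
  obtain ⟨q, hq, heq⟩ := t.exists_lie_e_eq_of_lie_h_eq
    (fun j ↦ by exact_mod_cast (by omega : n + 2 + j ≠ 0)) hez
  -- `z'` is killed by `e`, so `v` below is a nonzero vector of weight `-(n + 2)` to which
  -- `exists_nat_of_lie_f_lie_e_eq_zero` applies.
  set z' := z - q
  have hz' : ⁅h, z'⁆ = (n : K) • z' + w := by
    rw [lie_sub, hz, hq]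
    push_cast
    module
  have hez' : ⁅e, z'⁆ = 0 := by rw [lie_sub, heq, sub_self]
  set v := ((toEnd K L M f) ^ (n + 1)) z'
  have hfw : ((toEnd K L M f) ^ (n + 1)) w = 0 := P.pow_toEnd_f_eq_zero_of_eq_nat rfl
  have hv : ⁅h, v⁆ = (-((n + 2 : ℕ) : K)) • v := by
    rw [t.lie_h_pow_toEnd_f_of_lie_h_eq hz', hfw, add_zero]
    congr 1
    push_cast
    ring
  have hev : ⁅e, v⁆ = ((n : K) + 1) • ((toEnd K L M f) ^ n) w := by
    rw [t.lie_e_pow_succ_toEnd_f_of_lie_h_eq hz', hez', map_zero, sub_self, mul_zero, zero_smul,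
      zero_add, zero_add]
  have hfev : ⁅f, ⁅e, v⁆⁆ = 0 := by
    rw [hev, lie_smul, P.lie_f_pow_toEnd_f, hfw, smul_zero]
  have hv0 : v ≠ 0 := by
    intro hv0
    rw [hv0, lie_zero, eq_comm, smul_eq_zero_iff_right (Nat.cast_add_one_ne_zero n)] at hev
    exact P.pow_toEnd_f_ne_zero_of_eq_nat rfl le_rfl hev
  obtain ⟨N, hN⟩ := t.exists_nat_of_lie_f_lie_e_eq_zero hv0 hv hfev
  have : ((N + (n + 2) : ℕ) : K) = 0 := by push_cast at hN ⊢; linear_combination -hN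
  exact absurd (Nat.cast_eq_zero.mp this) (by omega)

lemma eq_zero_of_lie_h_eq (t : IsSl2Triple h e f) {μ : K} {z w : M}
    (hz : ⁅h, z⁆ = μ • z + w) (hw : ⁅h, w⁆ = μ • w) : w = 0 := by
  obtain ⟨r, hr⟩ := t.exists_pow_toEnd_e_eq_zero hw
  induction r generalizing μ z w with
  | zero => simpa using hr
  | succ r ih =>
    refine t.eq_zero_of_lie_e_eq_zero_of_lie_h_eq hz hw (ih (t.lie_h_lie_e_of_lie_h_eq hz)
      (by simpa using t.lie_h_lie_e_of_lie_h_eq (w := (0 : M)) (by simpa using hw)) ?_)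
    rwa [← toEnd_apply_apply K, ← Module.End.mul_apply, ← pow_succ]

lemma isCompl_ker_range_toEnd_sub_smul (t : IsSl2Triple h e f) (μ : K) :
    IsCompl (LinearMap.ker (toEnd K L M h - μ • 1)) (LinearMap.range (toEnd K L M h - μ • 1)) := by
  set T := toEnd K L M h - μ • 1
  refine (Submodule.isCompl_iff_disjoint _ _ ?_).mpr ?_
  · rw [add_comm]
    exact T.finrank_range_add_finrank_ker.ge
  rw [Submodule.disjoint_def]
  rintro _ hw ⟨z, rfl⟩
  have hT (x : M) : T x = ⁅h, x⁆ - μ • x := rfl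
  rw [LinearMap.mem_ker, hT, sub_eq_zero] at hw
  exact t.eq_zero_of_lie_h_eq (by rw [hT]; abel) hw

end Field

end IsSl2Triple

lemma LieModule.traceForm_apply_ad_sub_smul_eq_zero {R L M : Type*} [CommRing R] [LieRing L]
    [LieAlgebra R L] [AddCommGroup M] [Module R M] [LieRingModule L M] [LieModule R L M]
    [Module.Free R M] [Module.Finite R M] {x u : L} {μ : R} (hu : ⁅x, u⁆ = -μ • u) (c : L) :
    traceForm R L M u ((ad R L x - μ • 1) c) = 0 := by
  have := traceForm_apply_lie_apply' R L M x u c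
  rw [hu, neg_smul, map_neg, LinearMap.neg_apply, map_smul, LinearMap.smul_apply,
    neg_inj] at this
  simp only [LinearMap.sub_apply, LinearMap.smul_apply, Module.End.one_apply,
    LieAlgebra.ad_apply, map_sub, map_smul, ← this, sub_self]

/-- Let `g` be a finite-dimensional Lie algebra over a field of characteristic 0 with
nondegenerate Killing form `κ`, and `(e, h, f)` an `sl₂`-triple in `g`. On the
`(-1)`-eigenspace `g(-1)` of `ad h`, the form `ω_χ(ξ, η) = κ(e, ⁅ξ, η⁆)` is alternating
and nondegenerate, i.e. `(g(-1), ω_χ)` is a symplectic vector space. -/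
theorem stmt_14 (k : Type*) (g : Type*) [Field k] [CharZero k]
    [LieRing g] [LieAlgebra k g] [FiniteDimensional k g]
    (hkill : (killingForm k g).Nondegenerate)
    (e h f : g) (hne : e ≠ 0)
    (hhe : ⁅h, e⁆ = (2 : k) • e) (hhf : ⁅h, f⁆ = -((2 : k) • f)) (hef : ⁅e, f⁆ = h) :
    (∀ x : g, ⁅h, x⁆ = -x → killingForm k g e ⁅x, x⁆ = 0) ∧
    (∀ x : g, ⁅h, x⁆ = -x →
      (∀ y : g, ⁅h, y⁆ = -y → killingForm k g e ⁅x, y⁆ = 0) → x = 0) := by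
  refine ⟨fun x _ ↦ by simp, fun x hx hω ↦ ?_⟩
  have t : IsSl2Triple h e f :=
    { h_ne_zero := by
        rintro rfl
        rw [zero_lie, eq_comm, smul_eq_zero] at hhe
        exact hne (hhe.resolve_left two_ne_zero)
      lie_e_f := hef
      lie_h_e_nsmul := by rw [hhe, two_smul, two_smul]
      lie_h_f_nsmul := by rw [hhf, two_smul, two_smul] }
  have hx' : ⁅h, x⁆ = (-1 : k) • x + 0 := by rw [hx]; module
  have hu : ⁅h, ⁅e, x⁆⁆ = -(-1 : k) • ⁅e, x⁆ := by
    rw [t.lie_h_lie_e_of_lie_h_eq hx', lie_zero, add_zero]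
    norm_num
  have hex : ⁅e, x⁆ = 0 := by
    refine hkill.1 _ fun y ↦ ?_
    have hy : y ∈ LinearMap.ker (ad k g h - (-1 : k) • 1) ⊔ LinearMap.range _ :=
      (t.isCompl_ker_range_toEnd_sub_smul (M := g) (-1 : k)).sup_eq_top ▸ Submodule.mem_top
    obtain ⟨a, ha, _, ⟨c, rfl⟩, rfl⟩ := Submodule.mem_sup.mp hy
    have ha' : ⁅h, a⁆ = -a := eq_neg_of_add_eq_zero_left (by simpa using ha)
    rw [map_add, traceForm_apply_lie_apply, hω a ha', zero_add]
    exact traceForm_apply_ad_sub_smul_eq_zero hu c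
  by_contra hx0
  have P : t.HasPrimitiveVectorWith x (-1 : k) := ⟨hx0, by simpa using hx', hex⟩
  obtain ⟨n, hn⟩ := P.exists_nat
  exact Nat.cast_add_one_ne_zero n (by linear_combination -hn)
end
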